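/- Let n ≥ 1, let ψ : ℝⁿ → ℝ be continuously differentiable with 0 ≤ ψ(x) ≤ 1 and |∇ψ(x)| ≤ K for all x and some K > 0, let m ≥ 1 be an integer and λ ≥ 1, and set ξ(x) = exp(λ(ψ(x) + 6m)) and φ(x) = ξ(x) − λ·exp(6λ(m+1)). Then there exists a constant C > 0, depending only on λ, m and K, such that for all s > 0 and h ∈ (0,1] with s·h ≤ 1, every function z : ℝⁿ → ℝ, every x ∈ ℝⁿ and every i ∈ {1,…,n}: exp(s·φ(x))·|D_i( exp(−s·φ)·z )(x)| ≤ C·( |D_i z(x)| + s·ξ(x)·|A_i z(x)| ), where A_i f(x) = (f(x + (h/2)e_i) + f(x − (h/2)e_i))/2 and D_i f(x) = (f(x + (h/2)e_i) − f(x − (h/2)e_i))/h. -/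

import Mathlib

/-- Discrete difference operator in direction `i` with mesh size `h`. -/
noncomputable def Dop {n : ℕ} (h : ℝ) (i : Fin n) (f : (Fin n → ℝ) → ℝ)
    (x : Fin n → ℝ) : ℝ :=
  (f (x + Pi.single i (h / 2)) - f (x - Pi.single i (h / 2))) / h

/-- Discrete average operator in direction `i` with mesh size `h`. -/
noncomputable def Aop {n : ℕ} (h : ℝ) (i : Fin n) (f : (Fin n → ℝ) → ℝ)
    (x : Fin n → ℝ) : ℝ :=
  (f (x + Pi.single i (h / 2)) + f (x - Pi.single i (h / 2))) / 2

/-- The Carleman weight `ξ(x) = exp(λ(ψ(x) + 6m))`. -/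
noncomputable def xiW {n : ℕ} (lam : ℝ) (m : ℕ) (ψ : (Fin n → ℝ) → ℝ)
    (x : Fin n → ℝ) : ℝ :=
  Real.exp (lam * (ψ x + 6 * (m : ℝ)))

/-- The Carleman weight `φ(x) = ξ(x) − λ·exp(6λ(m+1))`. -/
noncomputable def phiW {n : ℕ} (lam : ℝ) (m : ℕ) (ψ : (Fin n → ℝ) → ℝ)
    (x : Fin n → ℝ) : ℝ :=
  xiW lam m ψ x - lam * Real.exp (6 * lam * ((m : ℝ) + 1))


private lemma exp_sub_exp_le' {a b : ℝ} (hab : a ≤ b) :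
    Real.exp b - Real.exp a ≤ Real.exp b * (b - a) := by
  have h1 : Real.exp (a - b) * Real.exp b = Real.exp a := by
    rw [← Real.exp_add]; ring_nf
  have h2 := Real.add_one_le_exp (a - b)
  nlinarith [Real.exp_pos b]

private lemma abs_exp_sub_exp_le' {a b M : ℝ} (ha : a ≤ M) (hb : b ≤ M) :
    |Real.exp a - Real.exp b| ≤ Real.exp M * |a - b| := by
  rcases le_total a b with hab | hab
  · have h1 := exp_sub_exp_le' hab
    have h2 : Real.exp b ≤ Real.exp M := Real.exp_le_exp.2 hb
    rw [abs_sub_comm, abs_of_nonneg (sub_nonneg.2 (Real.exp_le_exp.2 hab)),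
      abs_sub_comm, abs_of_nonneg (sub_nonneg.2 hab)]
    nlinarith [sub_nonneg.2 hab]
  · have h1 := exp_sub_exp_le' hab
    have h2 : Real.exp a ≤ Real.exp M := Real.exp_le_exp.2 ha
    rw [abs_of_nonneg (sub_nonneg.2 (Real.exp_le_exp.2 hab)),
      abs_of_nonneg (sub_nonneg.2 hab)]
    nlinarith [sub_nonneg.2 hab]

/-- For `ψ` a `C¹` cutoff valued in `[0,1]` with `‖∇ψ‖ ≤ K`,
`m ≥ 1`, `λ ≥ 1`, and the weights `ξ = exp(λ(ψ + 6m))`, `φ = ξ − λ·exp(6λ(m+1))`,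
there is `C > 0`, depending only on `λ, m, K`, such that for all `s > 0`,
`h ∈ (0,1]` with `s·h ≤ 1`, every function `z`, every `x` and every direction `i`,
`exp(sφ(x))·|D_i(exp(−sφ)·z)(x)| ≤ C·(|D_i z(x)| + s·ξ(x)·|A_i z(x)|)`. -/
theorem stmt17 (m : ℕ) (hm : 1 ≤ m) (lam K : ℝ) (hlam : 1 ≤ lam) (hK : 0 < K) :
    ∃ C > 0, ∀ (n : ℕ), 1 ≤ n → ∀ ψ : (Fin n → ℝ) → ℝ,
      ContDiff ℝ 1 ψ → (∀ x, 0 ≤ ψ x ∧ ψ x ≤ 1) → (∀ x, ‖fderiv ℝ ψ x‖ ≤ K) →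
      ∀ s h : ℝ, 0 < s → 0 < h → h ≤ 1 → s * h ≤ 1 →
      ∀ (z : (Fin n → ℝ) → ℝ) (x : Fin n → ℝ) (i : Fin n),
        Real.exp (s * phiW lam m ψ x) *
            |Dop h i (fun y => Real.exp (-(s * phiW lam m ψ y)) * z y) x|
          ≤ C * (|Dop h i z x| + s * xiW lam m ψ x * |Aop h i z x|) := by
  have hlam0 : (0:ℝ) < lam := lt_of_lt_of_le one_pos hlam
  set M : ℝ := lam * K * Real.exp (lam * (1 + 6 * m)) / 2 with hMdef
  have hMpos : 0 < M := by positivity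
  refine ⟨Real.exp M * (1 + lam * K * Real.exp lam), by positivity, ?_⟩
  intro n hn ψ hψC hψ01 hψK s h hs hh hh1 hsh z x i
  set E : ℝ := Real.exp (lam * (1 + 6 * m)) with hEdef
  set xp : Fin n → ℝ := x + Pi.single i (h / 2) with hxp
  set xm : Fin n → ℝ := x - Pi.single i (h / 2) with hxm
  -- Lipschitz bound on ψ
  have hlip : ∀ a b : Fin n → ℝ, |ψ a - ψ b| ≤ K * ‖a - b‖ := by
    intro a b
    have := Convex.norm_image_sub_le_of_norm_fderiv_le
      (fun y _ => (hψC.differentiable one_ne_zero).differentiableAt)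
      (fun y _ => hψK y) convex_univ (Set.mem_univ b) (Set.mem_univ a)
    simpa [Real.norm_eq_abs] using this
  have hns : ‖(Pi.single i (h / 2) : Fin n → ℝ)‖ = h / 2 := by
    rw [Pi.norm_single]
    rw [Real.norm_eq_abs, abs_of_pos (by positivity)]
  have hxp_x : ‖xp - x‖ = h / 2 := by
    rw [hxp]; simpa using hns
  have hxm_x : ‖xm - x‖ = h / 2 := by
    rw [hxm]
    have : x - Pi.single i (h/2) - x = -(Pi.single i (h/2)) := by abel
    rw [this, norm_neg, hns]
  -- ξ bounds
  have hxi_le : ∀ a : Fin n → ℝ, lam * (ψ a + 6 * m) ≤ lam * (1 + 6 * m) := by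
    intro a
    have := (hψ01 a).2
    nlinarith
  have hxid : ∀ a b : Fin n → ℝ,
      |xiW lam m ψ a - xiW lam m ψ b| ≤ E * (lam * |ψ a - ψ b|) := by
    intro a b
    have := abs_exp_sub_exp_le' (hxi_le a) (hxi_le b)
    have he : lam * (ψ a + 6 * m) - lam * (ψ b + 6 * m) = lam * (ψ a - ψ b) := by ring
    rw [he, abs_mul, abs_of_pos hlam0] at this
    simpa [xiW, hEdef, mul_assoc] using this
  -- exponents
  set ap : ℝ := s * (xiW lam m ψ x - xiW lam m ψ xp) with hap
  set am : ℝ := s * (xiW lam m ψ x - xiW lam m ψ xm) with ham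
  have hEpos : 0 < E := Real.exp_pos _
  have habd : ∀ (a : Fin n → ℝ), ‖a - x‖ = h / 2 →
      |s * (xiW lam m ψ x - xiW lam m ψ a)| ≤ M := by
    intro a hna
    have h1 := hxid x a
    have h2 : |ψ x - ψ a| ≤ K * (h / 2) := by
      have := hlip x a
      rw [show x - a = -(a - x) by abel, norm_neg, hna] at this
      exact this
    have h3 : |xiW lam m ψ x - xiW lam m ψ a| ≤ E * (lam * (K * (h/2))) := by
      refine h1.trans ?_
      have : lam * |ψ x - ψ a| ≤ lam * (K * (h/2)) := by
        exact mul_le_mul_of_nonneg_left h2 hlam0.le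
      exact mul_le_mul_of_nonneg_left this hEpos.le
    rw [abs_mul, abs_of_pos hs]
    calc s * |xiW lam m ψ x - xiW lam m ψ a| ≤ s * (E * (lam * (K * (h/2)))) :=
          mul_le_mul_of_nonneg_left h3 hs.le
      _ = (s * h) * (lam * K * E / 2) := by ring
      _ ≤ 1 * (lam * K * E / 2) := by
          have : 0 ≤ lam * K * E / 2 := by positivity
          exact mul_le_mul_of_nonneg_right hsh this
      _ = M := by rw [hMdef, hEdef]; ring
  have hapM : |ap| ≤ M := habd xp hxp_x
  have hamM : |am| ≤ M := habd xm hxm_x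
  -- exp identities
  have hP : Real.exp (s * phiW lam m ψ x) * Real.exp (-(s * phiW lam m ψ xp))
      = Real.exp ap := by
    rw [← Real.exp_add]; congr 1; simp [phiW, hap]; ring
  have hQ : Real.exp (s * phiW lam m ψ x) * Real.exp (-(s * phiW lam m ψ xm))
      = Real.exp am := by
    rw [← Real.exp_add]; congr 1; simp [phiW, ham]; ring
  -- key algebraic identity
  have key : Real.exp (s * phiW lam m ψ x) *
      Dop h i (fun y => Real.exp (-(s * phiW lam m ψ y)) * z y) x
      = (Real.exp ap + Real.exp am) / 2 * Dop h i z x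
        + ((Real.exp ap - Real.exp am) / h) * Aop h i z x := by
    simp only [Dop, Aop, ← hxp, ← hxm]
    have e1 : Real.exp (s * phiW lam m ψ x) *
        ((Real.exp (-(s * phiW lam m ψ xp)) * z xp
          - Real.exp (-(s * phiW lam m ψ xm)) * z xm) / h)
        = (Real.exp ap * z xp - Real.exp am * z xm) / h := by
      rw [← hP, ← hQ]; ring
    rw [e1]
    field_simp
    ring
  -- bounds on the coefficients
  have hexpM : ∀ {t : ℝ}, |t| ≤ M → Real.exp t ≤ Real.exp M := by
    intro t ht
    exact Real.exp_le_exp.2 ((abs_le.1 ht).2)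
  have hcoef1 : (Real.exp ap + Real.exp am) / 2 ≤ Real.exp M := by
    have := hexpM hapM
    have := hexpM hamM
    linarith
  have hcoef2 : |Real.exp ap - Real.exp am| / h ≤
      Real.exp M * (lam * K * Real.exp lam) * (s * xiW lam m ψ x) := by
    have h1 : |Real.exp ap - Real.exp am| ≤ Real.exp M * |ap - am| :=
      abs_exp_sub_exp_le' (abs_le.1 hapM).2 (abs_le.1 hamM).2
    have h2 : |ap - am| ≤ s * (E * (lam * (K * h))) := by
      have : ap - am = s * (xiW lam m ψ xm - xiW lam m ψ xp) := by
        rw [hap, ham]; ring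
      rw [this, abs_mul, abs_of_pos hs]
      have hd : |ψ xm - ψ xp| ≤ K * h := by
        calc |ψ xm - ψ xp| ≤ |ψ xm - ψ x| + |ψ x - ψ xp| := abs_sub_le _ _ _
          _ ≤ K * (h/2) + K * (h/2) := by
              have e1 : |ψ xm - ψ x| ≤ K * (h/2) := by
                have := hlip xm x
                rwa [show xm - x = -(x - xm) by abel, norm_neg,
                  show ‖x - xm‖ = h/2 by rw [show x - xm = -(xm - x) by abel, norm_neg, hxm_x]] at this
              have e2 : |ψ x - ψ xp| ≤ K * (h/2) := by
                have := hlip x xp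
                rwa [show x - xp = -(xp - x) by abel, norm_neg, hxp_x] at this
              exact add_le_add e1 e2
          _ = K * h := by ring
      have h3 := hxid xm xp
      have h4 : E * (lam * |ψ xm - ψ xp|) ≤ E * (lam * (K * h)) := by
        have := mul_le_mul_of_nonneg_left hd hlam0.le
        exact mul_le_mul_of_nonneg_left this hEpos.le
      exact mul_le_mul_of_nonneg_left (h3.trans h4) hs.le
    have hExi : E ≤ Real.exp lam * xiW lam m ψ x := by
      rw [hEdef, xiW, ← Real.exp_add]
      apply Real.exp_le_exp.2
      have := (hψ01 x).1
      nlinarith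
    have hxipos : 0 < xiW lam m ψ x := Real.exp_pos _
    rw [div_le_iff₀ hh]
    calc |Real.exp ap - Real.exp am| ≤ Real.exp M * (s * (E * (lam * (K * h)))) :=
          h1.trans (mul_le_mul_of_nonneg_left h2 (Real.exp_pos M).le)
      _ ≤ Real.exp M * (s * ((Real.exp lam * xiW lam m ψ x) * (lam * (K * h)))) := by
          have h5 : E * (lam * (K * h)) ≤ (Real.exp lam * xiW lam m ψ x) * (lam * (K * h)) := by
            have : 0 ≤ lam * (K * h) := by positivity
            exact mul_le_mul_of_nonneg_right hExi this
          have h6 := mul_le_mul_of_nonneg_left h5 hs.le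
          exact mul_le_mul_of_nonneg_left h6 (Real.exp_pos M).le
      _ = Real.exp M * (lam * K * Real.exp lam) * (s * xiW lam m ψ x) * h := by ring
  -- finish
  rw [← abs_of_pos (Real.exp_pos (s * phiW lam m ψ x)), ← abs_mul, key]
  have hDz := abs_nonneg (Dop h i z x)
  have hAz := abs_nonneg (Aop h i z x)
  have hxipos : 0 < xiW lam m ψ x := Real.exp_pos _
  calc |(Real.exp ap + Real.exp am) / 2 * Dop h i z x
        + (Real.exp ap - Real.exp am) / h * Aop h i z x|
      ≤ |(Real.exp ap + Real.exp am) / 2 * Dop h i z x|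
        + |(Real.exp ap - Real.exp am) / h * Aop h i z x| := abs_add_le _ _
    _ = (Real.exp ap + Real.exp am) / 2 * |Dop h i z x|
        + |Real.exp ap - Real.exp am| / h * |Aop h i z x| := by
        rw [abs_mul, abs_mul, abs_div, abs_div, abs_of_pos hh,
          abs_of_pos (by positivity : (0:ℝ) < Real.exp ap + Real.exp am),
          abs_of_pos (by norm_num : (0:ℝ) < 2)]
    _ ≤ Real.exp M * |Dop h i z x|
        + Real.exp M * (lam * K * Real.exp lam) * (s * xiW lam m ψ x) * |Aop h i z x| := by
        exact add_le_add (mul_le_mul_of_nonneg_right hcoef1 hDz)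
          (mul_le_mul_of_nonneg_right hcoef2 hAz)
    _ ≤ Real.exp M * (1 + lam * K * Real.exp lam) *
        (|Dop h i z x| + s * xiW lam m ψ x * |Aop h i z x|) := by
        have t1 : 0 ≤ Real.exp M * (lam * K * Real.exp lam) * |Dop h i z x| := by
          positivity
        have t2 : 0 ≤ Real.exp M * (s * xiW lam m ψ x * |Aop h i z x|) := by
          positivity
        have expand : Real.exp M * (1 + lam * K * Real.exp lam) *
            (|Dop h i z x| + s * xiW lam m ψ x * |Aop h i z x|)
            = (Real.exp M * |Dop h i z x|
              + Real.exp M * (lam * K * Real.exp lam) * (s * xiW lam m ψ x) * |Aop h i z x|)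
              + (Real.exp M * (lam * K * Real.exp lam) * |Dop h i z x|
                + Real.exp M * (s * xiW lam m ψ x * |Aop h i z x|)) := by ring
        rw [expand]
        linarith [t1, t2]
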